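/- Under the hypotheses that for each i at least two of e_i, f_i, g_i are equal and the three elements pairwise commute, the two definitions of AvN triple coincide: N_f odd is equivalent to all three numbers N_e, N_f, N_g being odd. -/

import Mathlib

/-- Pauli labels. -/
inductive PLbl : Type
  | I | X | Y | Z
deriving DecidableEq

instance instFintypePLbl : Fintype PLbl :=
  ⟨{PLbl.I, PLbl.X, PLbl.Y, PLbl.Z}, fun x => by cases x <;> decide⟩

open PLbl

/-- Multiplication of Pauli labels, discarding the phase. -/
def lmul : PLbl → PLbl → PLbl
  | I, p => p
  | p, I => p
  | X, X => I
  | Y, Y => I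
  | Z, Z => I
  | X, Y => Z
  | Y, X => Z
  | Y, Z => X
  | Z, Y => X
  | Z, X => Y
  | X, Z => Y

/-- Phase (as a power of i, in ℤ₄) arising from multiplying two Pauli labels:
XY = iZ, YZ = iX, ZX = iY, YX = -iZ, ZY = -iX, XZ = -iY. -/
def lphase : PLbl → PLbl → ZMod 4
  | X, Y => 1
  | Y, Z => 1
  | Z, X => 1
  | Y, X => 3
  | Z, Y => 3
  | X, Z => 3
  | _, _ => 0

/-- An element of the Pauli n-group: a global phase i^α and a tuple of labels. -/
def PauliEl (n : ℕ) : Type := ZMod 4 × (Fin n → PLbl)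

/-- Multiplication in the Pauli n-group. -/
def pmul {n : ℕ} (p q : PauliEl n) : PauliEl n :=
  (p.1 + q.1 + ∑ i, lphase (p.2 i) (q.2 i), fun i => lmul (p.2 i) (q.2 i))

lemma lphase_sub (p q : PLbl) :
    lphase p q - lphase q p = (if p ≠ q ∧ p ≠ I ∧ q ≠ I then 2 else 0 : ZMod 4) := by
  revert p q; decide

/-- If the phase sums agree both ways, the number of anticommuting sites is even. -/
lemma even_of_phase {n : ℕ} (a b : Fin n → PLbl)
    (h : (∑ i, lphase (a i) (b i)) = ∑ i, lphase (b i) (a i)) :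
    Even (Finset.univ.filter (fun i => a i ≠ b i ∧ a i ≠ I ∧ b i ≠ I)).card := by
  have h0 : (∑ i, (lphase (a i) (b i) - lphase (b i) (a i))) = 0 := by
    rw [Finset.sum_sub_distrib, h, sub_self]
  have h1 : (∑ i, if a i ≠ b i ∧ a i ≠ I ∧ b i ≠ I then (2 : ZMod 4) else 0) = 0 := by
    calc (∑ i, if a i ≠ b i ∧ a i ≠ I ∧ b i ≠ I then (2 : ZMod 4) else 0)
        = ∑ i, (lphase (a i) (b i) - lphase (b i) (a i)) :=
          Finset.sum_congr rfl fun i _ => (lphase_sub (a i) (b i)).symm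
      _ = 0 := h0
  rw [← Finset.sum_filter] at h1
  simp only [Finset.sum_const, nsmul_eq_mul] at h1
  have h2 : ((2 * (Finset.univ.filter (fun i => a i ≠ b i ∧ a i ≠ I ∧ b i ≠ I)).card : ℕ) :
      ZMod 4) = 0 := by
    push_cast; linear_combination h1
  rw [ZMod.natCast_eq_zero_iff] at h2
  rw [Nat.even_iff]; omega

lemma split_ef (a b c : PLbl) (h : a = b ∨ b = c ∨ a = c) :
    (if a ≠ b ∧ a ≠ I ∧ b ≠ I then 1 else 0 : ℕ)
      = (if b = c ∧ b ≠ a ∧ a ≠ I ∧ b ≠ I ∧ c ≠ I then 1 else 0)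
        + (if a = c ∧ c ≠ b ∧ a ≠ I ∧ b ≠ I ∧ c ≠ I then 1 else 0) := by
  revert a b c; decide

lemma split_fg (a b c : PLbl) (h : a = b ∨ b = c ∨ a = c) :
    (if b ≠ c ∧ b ≠ I ∧ c ≠ I then 1 else 0 : ℕ)
      = (if a = c ∧ c ≠ b ∧ a ≠ I ∧ b ≠ I ∧ c ≠ I then 1 else 0)
        + (if a = b ∧ b ≠ c ∧ a ≠ I ∧ b ≠ I ∧ c ≠ I then 1 else 0) := by
  revert a b c; decide

lemma split_eg (a b c : PLbl) (h : a = b ∨ b = c ∨ a = c) :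
    (if a ≠ c ∧ a ≠ I ∧ c ≠ I then 1 else 0 : ℕ)
      = (if b = c ∧ b ≠ a ∧ a ≠ I ∧ b ≠ I ∧ c ≠ I then 1 else 0)
        + (if a = b ∧ b ≠ c ∧ a ≠ I ∧ b ≠ I ∧ c ≠ I then 1 else 0) := by
  revert a b c; decide

lemma parity_conclusion (A B C : ℕ) (h1 : Even (B + C)) (h2 : Even (C + A)) :
    Odd C ↔ Odd B ∧ Odd C ∧ Odd A := by
  rw [Nat.even_add] at h1 h2
  simp only [Nat.even_iff, Nat.odd_iff] at *
  omega

/-- Equivalence of the two definitions of AvN triple: given that at each site at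
least two components agree and the three elements pairwise commute, N_f is odd
iff N_e, N_f, N_g are all odd. -/
theorem avn_defs_equivalent {n : ℕ} (e f g : PauliEl n)
    (hpe : e.1 = 0 ∨ e.1 = 2) (hpf : f.1 = 0 ∨ f.1 = 2) (hpg : g.1 = 0 ∨ g.1 = 2)
    (hcond1 : ∀ i, e.2 i = f.2 i ∨ f.2 i = g.2 i ∨ e.2 i = g.2 i)
    (hef : pmul e f = pmul f e) (hfg : pmul f g = pmul g f) (heg : pmul e g = pmul g e) :
    (let Ng := (Finset.univ.filter (fun i =>
        e.2 i = f.2 i ∧ f.2 i ≠ g.2 i ∧ e.2 i ≠ PLbl.I ∧ f.2 i ≠ PLbl.I ∧ g.2 i ≠ PLbl.I)).card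
     let Ne := (Finset.univ.filter (fun i =>
        f.2 i = g.2 i ∧ f.2 i ≠ e.2 i ∧ e.2 i ≠ PLbl.I ∧ f.2 i ≠ PLbl.I ∧ g.2 i ≠ PLbl.I)).card
     let Nf := (Finset.univ.filter (fun i =>
        e.2 i = g.2 i ∧ g.2 i ≠ f.2 i ∧ e.2 i ≠ PLbl.I ∧ f.2 i ≠ PLbl.I ∧ g.2 i ≠ PLbl.I)).card
     Odd Nf ↔ (Odd Ne ∧ Odd Nf ∧ Odd Ng)) := by
  intro Ng Ne Nf
  -- phase sum equalities from commutation
  have phase_eq : ∀ p q : PauliEl n, pmul p q = pmul q p →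
      (∑ i, lphase (p.2 i) (q.2 i)) = ∑ i, lphase (q.2 i) (p.2 i) := by
    intro p q h
    have h' := congrArg Prod.fst h
    simp only [pmul] at h'
    rw [add_comm q.1 p.1] at h'
    exact add_left_cancel h'
  have Hef := even_of_phase e.2 f.2 (phase_eq e f hef)
  have Hfg := even_of_phase f.2 g.2 (phase_eq f g hfg)
  have Heg := even_of_phase e.2 g.2 (phase_eq e g heg)
  -- split the anticommuting counts
  have hef_split : (Finset.univ.filter
      (fun i => e.2 i ≠ f.2 i ∧ e.2 i ≠ I ∧ f.2 i ≠ I)).card = Ne + Nf := by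
    show _ = (Finset.univ.filter _).card + (Finset.univ.filter _).card
    simp only [Finset.card_filter]
    rw [← Finset.sum_add_distrib]
    exact Finset.sum_congr rfl fun i _ => split_ef _ _ _ (hcond1 i)
  have hfg_split : (Finset.univ.filter
      (fun i => f.2 i ≠ g.2 i ∧ f.2 i ≠ I ∧ g.2 i ≠ I)).card = Nf + Ng := by
    show _ = (Finset.univ.filter _).card + (Finset.univ.filter _).card
    simp only [Finset.card_filter]
    rw [← Finset.sum_add_distrib]
    exact Finset.sum_congr rfl fun i _ => split_fg _ _ _ (hcond1 i)
  rw [hef_split] at Hef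
  rw [hfg_split] at Hfg
  exact parity_conclusion Ng Ne Nf Hef Hfg
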